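/- Let F := f₁ + F₂, where F₂: ℝⁿ ⇉ ℝᵐ has closed graph and f₁: ℝⁿ → ℝᵐ is continuously differentiable near x̄ ∈ dom F₂. Then for every ȳ ∈ F(x̄), every pair of directions (u,v) ∈ ℝⁿ × ℝᵐ and every y* ∈ ℝᵐ, D̄*F((x̄,ȳ);(u,v))(y*) = ∇f₁(x̄)ᵀ y* + D̄*F₂((x̄, ȳ − f₁(x̄)); (u, v − ∇f₁(x̄)u))(y*). -/

import Mathlib

/-! The graph of `f + F₂` is the preimage of `gph F₂` under `Ψ (x, y) = (x, y - f x)`, a `C¹`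
diffeomorphism with inverse `Φ (x, y) = (x, y + f x)`. Since derivatives map tangent cones into
tangent cones, a Fréchet normal `p` to the preimage at `z` yields the Fréchet normal `p ∘ Φ'(Ψ z)`
to `gph F₂` at `Ψ z`. Along the sequences defining a directional limiting normal, `Φ'` converges
because `f` is `C¹`, and the directions converge to `Ψ'(x̄, ȳ) (u, v) = (u, v - ∇f(x̄) u)`. As
`Φ'(x̄, ȳ - f x̄)` is `(w₁, w₂) ↦ (w₁, w₂ + ∇f(x̄) w₁)`, it turns `(u*, -y*)` into
`(u* - ∇f(x̄)ᵀ y*, -y*)`; exchanging the roles of `Ψ` and `Φ` gives the converse. -/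

open Filter Topology Set ENNReal NNReal

noncomputable section

variable {E Y : Type*} [NormedAddCommGroup E] [NormedSpace ℝ E]
  [NormedAddCommGroup Y] [NormedSpace ℝ Y]

/-- The tangent (Bouligand) cone to `A` at `x`:
`T_A(x) := {u : ∃ uᵢ → u, tᵢ ↓ 0 with x + tᵢ uᵢ ∈ A}`. -/
def tangentConeB (A : Set E) (x : E) : Set E :=
  {u | ∃ (t : ℕ → ℝ) (c : ℕ → E), (∀ i, 0 < t i) ∧ Tendsto t atTop (𝓝 0) ∧
    Tendsto c atTop (𝓝 u) ∧ ∀ i, x + t i • c i ∈ A}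

/-- The Fréchet normal cone to `A` at `x` (empty outside `A`):
the polar of the tangent cone. -/
def frechetNC (A : Set E) (x : E) : Set (E →L[ℝ] ℝ) :=
  {p | x ∈ A ∧ ∀ u ∈ tangentConeB A x, p u ≤ 0}

/-- The limiting normal cone to `A` at `x`. -/
def limitingNC (A : Set E) (x : E) : Set (E →L[ℝ] ℝ) :=
  {p | ∃ (xs : ℕ → E) (ps : ℕ → E →L[ℝ] ℝ),
    Tendsto xs atTop (𝓝 x) ∧ Tendsto ps atTop (𝓝 p) ∧
    ∀ i, ps i ∈ frechetNC A (xs i)}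

/-- The directional limiting normal cone to `A` at `x` in the direction `u`. -/
def dirLimitingNC (A : Set E) (x u : E) : Set (E →L[ℝ] ℝ) :=
  {p | ∃ (t : ℕ → ℝ) (us : ℕ → E) (ps : ℕ → (E →L[ℝ] ℝ)),
    (∀ i, 0 < t i) ∧ Tendsto t atTop (𝓝 0) ∧ Tendsto us atTop (𝓝 u) ∧
    Tendsto ps atTop (𝓝 p) ∧ ∀ i, ps i ∈ frechetNC A (x + t i • us i)}

/-- `A` is directionally regular at `x` in the direction `u`. -/
def DirRegularAt (A : Set E) (x u : E) : Prop :=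
  dirLimitingNC A x u =
    {p | ∀ (t : ℕ → ℝ), (∀ i, 0 < t i) → Tendsto t atTop (𝓝 0) →
      ∃ (us : ℕ → E) (ps : ℕ → (E →L[ℝ] ℝ)), Tendsto us atTop (𝓝 u) ∧
        Tendsto ps atTop (𝓝 p) ∧ ∀ i, ps i ∈ frechetNC A (x + t i • us i)}

/-- `A` is directionally regular at `x` (in all directions). -/
def DirRegular (A : Set E) (x : E) : Prop := ∀ u, DirRegularAt A x u

/-- The pair `(u*, v*)` viewed as a linear functional on `E × Y`. -/
def pairFun (us : E →L[ℝ] ℝ) (vs : Y →L[ℝ] ℝ) : (E × Y) →L[ℝ] ℝ :=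
  us.coprod vs

/-- The primal-dual derivative of the mapping with graph `G` at `z ∈ G`:
`D̂F(xb,yb)(u,v*) := {(u*,v) : (u*,−v*) ∈ N̄_{gph F}((xb,yb);(u,v))}`. -/
def pdDeriv (G : Set (E × Y)) (z : E × Y) (u : E) (vs : Y →L[ℝ] ℝ) :
    Set ((E →L[ℝ] ℝ) × Y) :=
  {w | pairFun w.1 (-vs) ∈ dirLimitingNC G z (u, w.2)}

/-- `rg[F](xb,yb)`. -/
def rgL (G : Set (E × Y)) (z : E × Y) : ℝ≥0∞ :=
  ⨅ (u : E) (vs : Y →L[ℝ] ℝ) (w : (E →L[ℝ] ℝ) × Y) (_ : ‖u‖ = 1)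
    (_ : ‖vs‖ = 1) (_ : w ∈ pdDeriv G z u vs),
    ENNReal.ofReal (max ‖w.1‖ ‖w.2‖)

/-- `rg⋄[F](xb,yb)`. -/
def rgDiamond (G : Set (E × Y)) (z : E × Y) : ℝ≥0∞ :=
  ⨅ (u : E) (vs : Y →L[ℝ] ℝ) (w : (E →L[ℝ] ℝ) × Y) (_ : ‖u‖ = 1)
    (_ : ‖vs‖ = 1) (_ : w ∈ pdDeriv G z u vs) (_ : w.1 u = vs w.2),
    ENNReal.ofReal (max ‖w.1‖ ‖w.2‖)

/-- `rg°[F](xb,yb)`. -/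
def rgCirc (G : Set (E × Y)) (z : E × Y) : ℝ≥0∞ :=
  ⨅ (u : E) (vs : Y →L[ℝ] ℝ) (B : E →L[ℝ] Y) (_ : ‖u‖ = 1) (_ : ‖vs‖ = 1)
    (_ : (vs.comp B, B u) ∈ pdDeriv G z u vs),
    ENNReal.ofReal ‖B‖

/-- `r̂g[F](xb,yb)`. -/
def rgHat (G : Set (E × Y)) (z : E × Y) : ℝ≥0∞ :=
  ⨅ (u : E) (vs : Y →L[ℝ] ℝ) (w : (E →L[ℝ] ℝ) × Y) (_ : ‖u‖ = 1)
    (_ : ‖vs‖ = 1) (_ : w ∈ pdDeriv G z u vs),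
    ENNReal.ofReal (‖w.1‖ + ‖w.2‖)

/-- `rg†[F](xb,yb)` (intended for the Euclidean setting). -/
def rgDagger (G : Set (E × Y)) (z : E × Y) : ℝ≥0∞ :=
  ⨅ (u : E) (vs : Y →L[ℝ] ℝ) (w : (E →L[ℝ] ℝ) × Y) (_ : ‖u‖ = 1)
    (_ : ‖vs‖ = 1) (_ : w ∈ pdDeriv G z u vs) (_ : w.1 u = vs w.2),
    ENNReal.ofReal (Real.sqrt (‖w.1‖ ^ 2 + ‖w.2‖ ^ 2 - (w.1 u) ^ 2))

/-- Metric subregularity at `xb` for `yb` of the mapping with graph `G`. -/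
def MetricSubregAt (G : Set (E × Y)) (xb : E) (yb : Y) : Prop :=
  (xb, yb) ∈ G ∧ ∃ κ : ℝ≥0, ∃ U ∈ 𝓝 xb, ∀ x ∈ U,
    EMetric.infEdist x {x' | (x', yb) ∈ G} ≤
      (κ : ℝ≥0∞) * EMetric.infEdist yb {y | (x, y) ∈ G}

/-- The graph of `F + h`, where `G` is the graph of `F`. -/
def sumGraph (G : Set (E × Y)) (h : E → Y) : Set (E × Y) :=
  {p | (p.1, p.2 - h p.1) ∈ G}

/-- `h` is Lipschitz continuous around `xb`. -/
def LipschitzAround (h : E → Y) (xb : E) : Prop :=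
  ∃ K : ℝ≥0, ∃ U ∈ 𝓝 xb, LipschitzOnWith K h U

/-- The Lipschitz modulus `lip(h;xb)`. -/
def lipMod (h : E → Y) (xb : E) : ℝ≥0∞ :=
  Filter.limsup (fun p : E × E => ENNReal.ofReal (‖h p.1 - h p.2‖ / ‖p.1 - p.2‖))
    ((𝓝 xb ×ˢ 𝓝 xb) ⊓ 𝓟 {p : E × E | p.1 ≠ p.2})

/-- The radius of metric subregularity w.r.t. Lipschitz perturbations. -/
def radLip (G : Set (E × Y)) (xb : E) (yb : Y) : ℝ≥0∞ :=
  ⨅ (h : E → Y) (_ : LipschitzAround h xb) (_ : h xb = 0)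
    (_ : ¬ MetricSubregAt (sumGraph G h) xb yb), lipMod h xb

/-- The Clarke generalized Jacobian of `h` at `x`. -/
def clarkeJac (h : E → Y) (x : E) : Set (E →L[ℝ] Y) :=
  convexHull ℝ {B | ∃ xs : ℕ → E, Tendsto xs atTop (𝓝 x) ∧
    (∀ i, DifferentiableAt ℝ h (xs i)) ∧
    Tendsto (fun i => fderiv ℝ h (xs i)) atTop (𝓝 B)}

/-- `h` is semismooth at `xb`. -/
def SemismoothAt (h : E → Y) (xb : E) : Prop :=
  LipschitzAround h xb ∧
  ∀ u : E, ∃ L : Y, ∀ (t : ℕ → ℝ) (us : ℕ → E) (V : ℕ → E →L[ℝ] Y),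
    (∀ i, 0 < t i) → Tendsto t atTop (𝓝 0) → Tendsto us atTop (𝓝 u) →
    (∀ i, V i ∈ clarkeJac h (xb + t i • us i)) →
    Tendsto (fun i => V i (us i)) atTop (𝓝 L)

/-- `h` is continuously differentiable around `xb`. -/
def C1Around (h : E → Y) (xb : E) : Prop :=
  ∃ U ∈ 𝓝 xb, ContDiffOn ℝ 1 h U

/-- The radius of metric subregularity w.r.t. semismooth perturbations. -/
def radSS (G : Set (E × Y)) (xb : E) (yb : Y) : ℝ≥0∞ :=
  ⨅ (h : E → Y) (_ : SemismoothAt h xb) (_ : h xb = 0)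
    (_ : ¬ MetricSubregAt (sumGraph G h) xb yb), lipMod h xb

/-- The radius of metric subregularity w.r.t. `C¹` perturbations. -/
def radC1 (G : Set (E × Y)) (xb : E) (yb : Y) : ℝ≥0∞ :=
  ⨅ (h : E → Y) (_ : C1Around h xb) (_ : h xb = 0)
    (_ : ¬ MetricSubregAt (sumGraph G h) xb yb), lipMod h xb

open Function

section ChangeOfVariables

variable {X X' : Type*} [NormedAddCommGroup X] [NormedSpace ℝ X]
  [NormedAddCommGroup X'] [NormedSpace ℝ X']

theorem HasFDerivAt.tendsto_inv_smul_sub {Ψ : X → X'} {L : X →L[ℝ] X'} {z w : X}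
    (hΨ : HasFDerivAt Ψ L z) {t : ℕ → ℝ} {c : ℕ → X} (ht : ∀ i, t i ≠ 0)
    (ht0 : Tendsto t atTop (𝓝 0)) (hc : Tendsto c atTop (𝓝 w)) :
    Tendsto (fun i => (t i)⁻¹ • (Ψ (z + t i • c i) - Ψ z)) atTop (𝓝 (L w)) := by
  refine (hasFDerivWithinAt_univ.2 hΨ).lim (by simpa using ht0.smul hc)
    (.of_forall fun _ => mem_univ _) ?_
  simpa only [inv_smul_smul₀ (ht _)] using hc

theorem HasFDerivAt.mapsTo_tangentConeB_preimage {Ψ : X → X'} {L : X →L[ℝ] X'} {z : X}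
    (hΨ : HasFDerivAt Ψ L z) (A : Set X') :
    MapsTo L (tangentConeB (Ψ ⁻¹' A) z) (tangentConeB A (Ψ z)) := by
  rintro w ⟨t, c, ht, ht0, hc, hmem⟩
  refine ⟨t, fun i => (t i)⁻¹ • (Ψ (z + t i • c i) - Ψ z), ht, ht0,
    hΨ.tendsto_inv_smul_sub (fun i => (ht i).ne') ht0 hc, fun i => ?_⟩
  rw [smul_inv_smul₀ (ht i).ne', add_sub_cancel]
  exact hmem i

theorem comp_mem_frechetNC_preimage {Ψ : X → X'} {Φ : X' → X} (hleft : LeftInverse Φ Ψ)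
    (hright : RightInverse Φ Ψ) {M : X' →L[ℝ] X} {z : X} (hΦ : HasFDerivAt Φ M (Ψ z))
    {A : Set X'} {p : X →L[ℝ] ℝ} (hp : p ∈ frechetNC (Ψ ⁻¹' A) z) :
    p.comp M ∈ frechetNC A (Ψ z) := by
  have hpre : Φ ⁻¹' (Ψ ⁻¹' A) = A := by
    ext a
    simp only [mem_preimage, hright a]
  refine ⟨hp.1, fun w hw => hp.2 _ ?_⟩
  have := hΦ.mapsTo_tangentConeB_preimage (Ψ ⁻¹' A) (hpre.symm ▸ hw)
  rwa [hleft z] at this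

theorem mem_dirLimitingNC_of_eventually {A : Set X} {x u : X} {p : X →L[ℝ] ℝ} {t : ℕ → ℝ}
    {us : ℕ → X} {ps : ℕ → X →L[ℝ] ℝ} (ht : ∀ i, 0 < t i) (ht0 : Tendsto t atTop (𝓝 0))
    (hus : Tendsto us atTop (𝓝 u)) (hps : Tendsto ps atTop (𝓝 p))
    (hmem : ∀ᶠ i in atTop, ps i ∈ frechetNC A (x + t i • us i)) :
    p ∈ dirLimitingNC A x u := by
  obtain ⟨N, hN⟩ := eventually_atTop.1 hmem
  exact ⟨fun i => t (i + N), fun i => us (i + N), fun i => ps (i + N), fun i => ht _,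
    (tendsto_add_atTop_iff_nat N).2 ht0, (tendsto_add_atTop_iff_nat N).2 hus,
    (tendsto_add_atTop_iff_nat N).2 hps, fun i => hN _ (Nat.le_add_left N i)⟩

theorem comp_mem_dirLimitingNC_preimage {Ψ : X → X'} {Φ : X' → X} (hleft : LeftInverse Φ Ψ)
    (hright : RightInverse Φ Ψ) {L : X →L[ℝ] X'} {z w : X} (hΨ : HasFDerivAt Ψ L z)
    (hΦ : ContDiffAt ℝ 1 Φ (Ψ z)) {A : Set X'} {p : X →L[ℝ] ℝ}
    (hp : p ∈ dirLimitingNC (Ψ ⁻¹' A) z w) :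
    p.comp (fderiv ℝ Φ (Ψ z)) ∈ dirLimitingNC A (Ψ z) (L w) := by
  obtain ⟨t, c, ps, ht, ht0, hc, hps, hmem⟩ := hp
  have hzs : Tendsto (fun i => Ψ (z + t i • c i)) atTop (𝓝 (Ψ z)) :=
    hΨ.continuousAt.tendsto.comp (by simpa using tendsto_const_nhds.add (ht0.smul hc))
  have hΦ_diff : ∀ᶠ i in atTop, HasFDerivAt Φ (fderiv ℝ Φ (Ψ (z + t i • c i)))
      (Ψ (z + t i • c i)) :=
    hzs.eventually ((hΦ.eventually (by simp)).mono fun _ h =>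
      (h.differentiableAt one_ne_zero).hasFDerivAt)
  have hΦ_cont := (hΦ.continuousAt_fderiv one_ne_zero).tendsto.comp hzs
  refine mem_dirLimitingNC_of_eventually ht ht0
    (hΨ.tendsto_inv_smul_sub (fun i => (ht i).ne') ht0 hc)
    ((isBoundedBilinearMap_comp.continuous.tendsto _).comp (hps.prodMk_nhds hΦ_cont)) ?_
  filter_upwards [hΦ_diff] with i hi
  rw [smul_inv_smul₀ (ht i).ne', add_sub_cancel]
  exact comp_mem_frechetNC_preimage hleft hright hi (hmem i)

end ChangeOfVariables

section SumGraph

def graphShift {α β : Type*} [Sub β] (f : α → β) (p : α × β) : α × β := (p.1, p.2 - f p.1)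

/-- `shear (fderiv ℝ f x)` is the derivative of `(x, y) ↦ (x, y + f x)`, which maps `G` onto
`sumGraph G f`. -/
def shear (A : E →L[ℝ] Y) : E × Y →L[ℝ] E × Y :=
  (ContinuousLinearMap.fst ℝ E Y).prod
    (ContinuousLinearMap.snd ℝ E Y + A.comp (ContinuousLinearMap.fst ℝ E Y))

@[simp]
theorem shear_apply (A : E →L[ℝ] Y) (w : E × Y) : shear A w = (w.1, w.2 + A w.1) := rfl

theorem shear_comp_shear_neg (A : E →L[ℝ] Y) : (shear A).comp (shear (-A)) = .id ℝ (E × Y) := by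
  ext w <;> simp

theorem pairFun_comp_shear (a : E →L[ℝ] ℝ) (b : Y →L[ℝ] ℝ) (A : E →L[ℝ] Y) :
    (pairFun a b).comp (shear A) = pairFun (a + b.comp A) b := by
  ext w <;> simp [pairFun]

theorem sumGraph_eq_preimage {α β : Type*} [NormedAddCommGroup β]
    (G : Set (α × β)) (f : α → β) :
    sumGraph G f = graphShift f ⁻¹' G := rfl

theorem leftInverse_graphShift_neg {α β : Type*} [AddGroup β] (f : α → β) :
    LeftInverse (graphShift (-f)) (graphShift f) :=
  fun p => by simp [graphShift]

theorem rightInverse_graphShift_neg {α β : Type*} [AddGroup β] (f : α → β) :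
    RightInverse (graphShift (-f)) (graphShift f) :=
  fun p => by simp [graphShift]

theorem HasFDerivAt.graphShift {f : E → Y} {A : E →L[ℝ] Y} {p : E × Y}
    (hf : HasFDerivAt f A p.1) : HasFDerivAt (graphShift f) (shear (-A)) p := by
  refine (hasFDerivAt_fst.prodMk
    (hasFDerivAt_snd.sub (hf.comp p hasFDerivAt_fst))).congr_fderiv ?_
  ext w <;> simp [sub_eq_add_neg]

theorem ContDiffAt.graphShift {n : WithTop ℕ∞} {f : E → Y} {p : E × Y}
    (hf : ContDiffAt ℝ n f p.1) : ContDiffAt ℝ n (graphShift f) p :=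
  contDiffAt_fst.prodMk (contDiffAt_snd.sub (hf.comp p contDiffAt_fst))

theorem mem_dirLimitingNC_sumGraph_iff (G : Set (E × Y)) {f : E → Y} {x : E}
    (hf : ContDiffAt ℝ 1 f x) (y : Y) (u : E) (v : Y) (p : E × Y →L[ℝ] ℝ) :
    p ∈ dirLimitingNC (sumGraph G f) (x, y) (u, v) ↔
      p.comp (shear (fderiv ℝ f x)) ∈
        dirLimitingNC G (x, y - f x) (u, v - fderiv ℝ f x u) := by
  have hA : HasFDerivAt f (fderiv ℝ f x) x := (hf.differentiableAt one_ne_zero).hasFDerivAt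
  constructor
  · intro hp
    have := comp_mem_dirLimitingNC_preimage (leftInverse_graphShift_neg f)
      (rightInverse_graphShift_neg f) (HasFDerivAt.graphShift (p := (x, y)) hA)
      (ContDiffAt.graphShift hf.neg) hp
    rw [(HasFDerivAt.graphShift hA.neg).fderiv, neg_neg] at this
    simpa [graphShift, sub_eq_add_neg] using this
  · intro hp
    have hpre : graphShift (-f) ⁻¹' sumGraph G f = G := by
      rw [sumGraph_eq_preimage, ← preimage_comp, (rightInverse_graphShift_neg f).comp_eq_id,
        preimage_id]
    have := comp_mem_dirLimitingNC_preimage (rightInverse_graphShift_neg f)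
      (leftInverse_graphShift_neg f) (HasFDerivAt.graphShift (p := (x, y - f x)) hA.neg)
      (ContDiffAt.graphShift hf) (hpre.symm ▸ hp)
    rw [(HasFDerivAt.graphShift hA).fderiv, ContinuousLinearMap.comp_assoc,
      shear_comp_shear_neg, ContinuousLinearMap.comp_id] at this
    simpa [graphShift] using this

end SumGraph

theorem statement16_general
    (G₂ : Set (E × Y)) (f₁ : E → Y) (xb : E)
    (hC1 : ∃ U ∈ 𝓝 xb, ContDiffOn ℝ 1 f₁ U)
    (yb : Y)
    (u : E) (v : Y) (ys : Y →L[ℝ] ℝ) :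
    {us : E →L[ℝ] ℝ |
        pairFun us (-ys) ∈
          dirLimitingNC {p : E × Y | (p.1, p.2 - f₁ p.1) ∈ G₂} (xb, yb) (u, v)} =
      (fun q : E →L[ℝ] ℝ => ys.comp (fderiv ℝ f₁ xb) + q) ''
        {us : E →L[ℝ] ℝ |
          pairFun us (-ys) ∈
            dirLimitingNC G₂ (xb, yb - f₁ xb) (u, v - fderiv ℝ f₁ xb u)} := by
  obtain ⟨U, hU, hf⟩ := hC1
  ext us
  rw [image_add_left, mem_preimage, mem_ofPred_eq, mem_ofPred_eq, ← sumGraph,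
    mem_dirLimitingNC_sumGraph_iff G₂ (hf.contDiffAt hU), pairFun_comp_shear,
    ContinuousLinearMap.neg_comp, add_comm]

/-- directional limiting coderivative sum rule for `F = f₁ + F₂`
with `f₁` continuously differentiable near `xb`. -/
theorem statement16 [FiniteDimensional ℝ E] [FiniteDimensional ℝ Y]
    (G₂ : Set (E × Y)) (hG₂ : IsClosed G₂) (f₁ : E → Y) (xb : E)
    (hC1 : ∃ U ∈ 𝓝 xb, ContDiffOn ℝ 1 f₁ U)
    (hdom : ∃ y, (xb, y) ∈ G₂)
    (yb : Y) (hyb : (xb, yb - f₁ xb) ∈ G₂)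
    (u : E) (v : Y) (ys : Y →L[ℝ] ℝ) :
    {us : E →L[ℝ] ℝ |
        pairFun us (-ys) ∈
          dirLimitingNC {p : E × Y | (p.1, p.2 - f₁ p.1) ∈ G₂} (xb, yb) (u, v)} =
      (fun q : E →L[ℝ] ℝ => ys.comp (fderiv ℝ f₁ xb) + q) ''
        {us : E →L[ℝ] ℝ |
          pairFun us (-ys) ∈
            dirLimitingNC G₂ (xb, yb - f₁ xb) (u, v - fderiv ℝ f₁ xb u)} :=
  statement16_general G₂ f₁ xb hC1 yb u v ys
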